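/- arXiv:1912.05577 — 2 statements merged into one kernel-verified Lean document; each statement's English description precedes it below -/
import Mathlib

section
/- Let $p, c_1, \dots, c_n$ be reals with $p > c_i$ for all $i$, let $C_i \ge 0$, $y_i \in \{0,1\}$, $d \ge 0$. The dual linear program $\max \beta d + \sum_{i=1}^n C_i y_i \upsilon_i$ subject to $\beta + \upsilon_i \le c_i$ for all $i$, $\beta \le p$, $\upsilon_i \le 0$, attains its optimum at a point of the form $\beta = c_{i^*}$ (for some $i^* \in \{0,\dots,n\}$ with $c_0 := p$) and $\upsilon_i = \min\{0, c_i - c_{i^*}\}$. -/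
open Finset

lemma key_lemma (n : ℕ) (p : ℝ) (c : Fin n → ℝ) (w : Fin n → ℝ) (d : ℝ)
    (hp : ∀ i, c i ≤ p) (hw : ∀ i, 0 ≤ w i) (hd : 0 ≤ d) (β : ℝ) (hβ : β ≤ p) :
    ∃ j : Fin (n+1),
      β * d + ∑ i, w i * min 0 (c i - β) ≤
      (Fin.cases p c j : ℝ) * d + ∑ i, w i * min 0 (c i - (Fin.cases p c j : ℝ)) := by
  set b : Fin (n+1) → ℝ := Fin.cases p c with hb
  by_cases hA : ∃ j, b j ≤ β
  · obtain ⟨j0, hj0⟩ := hA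
    obtain ⟨jlo, hjloA, hjlo⟩ := Finset.exists_max_image
      (univ.filter (fun j => b j ≤ β)) b ⟨j0, by simp [hj0]⟩
    obtain ⟨jhi, hjhiH, hjhi⟩ := Finset.exists_min_image
      (univ.filter (fun j => β ≤ b j)) b ⟨0, by simp [hb, hβ]⟩
    simp only [mem_filter, mem_univ, true_and] at hjloA hjhiH
    set lo := b jlo with hlo
    set hi := b jhi with hhi
    have hfact : ∀ i, c i ≤ lo ∨ hi ≤ c i := by
      intro i
      rcases le_or_gt (c i) β with h | h
      · left
        have := hjlo i.succ (by simp [hb, h])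
        simpa [hb] using this
      · right
        have := hjhi i.succ (by simp [hb, h.le])
        simpa [hb] using this
    set I := univ.filter (fun i => c i ≤ lo) with hI
    have hlin : ∀ x, lo ≤ x → x ≤ hi →
        x * d + ∑ i, w i * min 0 (c i - x)
          = x * (d - ∑ i ∈ I, w i) + ∑ i ∈ I, w i * c i := by
      intro x hx1 hx2
      have hsplit : ∑ i, w i * min 0 (c i - x)
          = ∑ i ∈ I, w i * min 0 (c i - x)
            + ∑ i ∈ univ.filter (fun i => ¬ c i ≤ lo), w i * min 0 (c i - x) :=
        (Finset.sum_filter_add_sum_filter_not univ _ _).symm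
      have h1 : ∑ i ∈ I, w i * min 0 (c i - x) = ∑ i ∈ I, (w i * c i - w i * x) := by
        refine Finset.sum_congr rfl fun i hi' => ?_
        simp only [hI, mem_filter, mem_univ, true_and] at hi'
        rw [min_eq_right (by linarith)]
        ring
      have h2 : ∑ i ∈ univ.filter (fun i => ¬ c i ≤ lo), w i * min 0 (c i - x) = 0 := by
        refine Finset.sum_eq_zero fun i hi' => ?_
        simp only [mem_filter, mem_univ, true_and] at hi'
        have : hi ≤ c i := (hfact i).resolve_left hi'
        rw [min_eq_left (by linarith)]
        ring
      rw [hsplit, h1, h2, Finset.sum_sub_distrib, ← Finset.sum_mul]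
      ring
    have hlohi : lo ≤ hi := le_trans hjloA hjhiH
    rcases le_or_gt 0 (d - ∑ i ∈ I, w i) with hs | hs
    · refine ⟨jhi, ?_⟩
      rw [hlin β hjloA hjhiH, hlin hi hlohi le_rfl]
      have := mul_le_mul_of_nonneg_right hjhiH hs
      linarith [this]
    · refine ⟨jlo, ?_⟩
      rw [hlin β hjloA hjhiH, hlin lo le_rfl hlohi]
      nlinarith [hjloA]
  · push_neg at hA
    obtain ⟨j, -, hj⟩ := Finset.exists_min_image univ b ⟨0, mem_univ 0⟩
    refine ⟨j, ?_⟩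
    have h1 : ∀ i, w i * min 0 (c i - β) = 0 := by
      intro i
      have : β < c i := by simpa [hb] using hA i.succ
      rw [min_eq_left (by linarith)]
      ring
    have h2 : ∀ i, w i * min 0 (c i - b j) = 0 := by
      intro i
      have : b j ≤ c i := by simpa [hb] using hj i.succ (mem_univ _)
      rw [min_eq_left (by linarith)]
      ring
    simp only [← hb]
    rw [Finset.sum_congr rfl fun i _ => h1 i, Finset.sum_congr rfl fun i _ => h2 i]
    simp only [Finset.sum_const_zero]
    have : β ≤ b j := (hA j).le
    nlinarith

theorem stmt1 (n : ℕ) (p : ℝ) (c : Fin n → ℝ) (C y : Fin n → ℝ) (d : ℝ)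
    (hp : ∀ i, c i < p) (hC : ∀ i, 0 ≤ C i) (hy : ∀ i, y i = 0 ∨ y i = 1)
    (hd : 0 ≤ d) :
    ∃ istar : Fin (n+1),
      IsGreatest
        {v : ℝ | ∃ (β : ℝ) (υ : Fin n → ℝ),
          (∀ i, β + υ i ≤ c i) ∧ β ≤ p ∧ (∀ i, υ i ≤ 0) ∧
          v = β * d + ∑ i, C i * y i * υ i}
        ((Fin.cases p c istar : ℝ) * d +
          ∑ i, C i * y i * min 0 (c i - (Fin.cases p c istar : ℝ))) := by
  set w : Fin n → ℝ := fun i => C i * y i with hw'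
  have hw : ∀ i, 0 ≤ w i := fun i => by
    rcases hy i with h | h <;> simp [hw', h, hC i]
  set b : Fin (n+1) → ℝ := Fin.cases p c with hb
  have hbp : ∀ j, b j ≤ p := by
    intro j
    induction j using Fin.cases with
    | zero => simp [hb]
    | succ i => simpa [hb] using (hp i).le
  obtain ⟨istar, -, histar⟩ := Finset.exists_max_image univ
    (fun j => b j * d + ∑ i, w i * min 0 (c i - b j)) ⟨0, mem_univ 0⟩
  refine ⟨istar, ?_, ?_⟩
  · -- membership
    refine ⟨b istar, fun i => min 0 (c i - b istar), fun i => ?_, hbp istar, fun i => min_le_left _ _, rfl⟩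
    have := min_le_right (0:ℝ) (c i - b istar)
    linarith
  · -- upper bound
    rintro v ⟨β, υ, h1, h2, h3, rfl⟩
    have step1 : β * d + ∑ i, w i * υ i ≤ β * d + ∑ i, w i * min 0 (c i - β) := by
      have : ∑ i, w i * υ i ≤ ∑ i, w i * min 0 (c i - β) := by
        refine Finset.sum_le_sum fun i _ => ?_
        exact mul_le_mul_of_nonneg_left (le_min (h3 i) (by linarith [h1 i])) (hw i)
      linarith
    obtain ⟨j, hj⟩ := key_lemma n p c w d (fun i => (hp i).le) hw hd β h2
    calc β * d + ∑ i, C i * y i * υ i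
        ≤ β * d + ∑ i, w i * min 0 (c i - β) := step1
      _ ≤ b j * d + ∑ i, w i * min 0 (c i - b j) := hj
      _ ≤ b istar * d + ∑ i, w i * min 0 (c i - b istar) := histar j (mem_univ j)
end

section
/- With $h(d)$ as the optimal cost of the single-customer transportation LP (capacities $K_i \ge 0$, costs $0 \le c_i < p$), and $g(d) = \max_{i^* \in \{0, \dots, n\}} \big( c_{i^*} d + \sum_{i : c_i < c_{i^*}} K_i (c_i - c_{i^*}) \big)$ with $c_0 := p$: the greedy primal value and the max-form dual value coincide, i.e., $h(d) = g(d)$ for all $d \ge 0$. -/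
/-!
Weak duality is termwise: for any price `t ≤ p` and `0 ≤ xᵢ ≤ Kᵢ`, the term `t xᵢ` plus the
rebate `Kᵢ (cᵢ - t)` (taken only when `cᵢ < t`) is at most `cᵢ xᵢ`, and the slack costs `p ≥ t` per unit.
Conversely the greedy solution, which fills the cheapest suppliers to capacity and sends the
rest of the demand to the next one (or to the slack at price `p`), attains the dual term whose
price is the cost of the last supplier it uses.
-/

open Finset

section

variable {ι : Type*}

noncomputable def dualBound (s : Finset ι) (c K : ι → ℝ) (t d : ℝ) : ℝ :=
  t * d + ∑ i ∈ s with c i < t, K i * (c i - t)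

lemma mul_add_ite_le_mul {c K t x : ℝ} (hx₀ : 0 ≤ x) (hxK : x ≤ K) :
    t * x + (if c < t then K * (c - t) else 0) ≤ c * x := by
  split_ifs with h
  · nlinarith
  · nlinarith [not_lt.1 h]

lemma dualBound_le_cost (s : Finset ι) (c K x : ι → ℝ) {p t sl : ℝ} (ht : t ≤ p)
    (hx : ∀ i ∈ s, 0 ≤ x i ∧ x i ≤ K i) (hsl : 0 ≤ sl) :
    dualBound s c K t ((∑ i ∈ s, x i) + sl) ≤ ∑ i ∈ s, c i * x i + p * sl := by
  have hterm : ∑ i ∈ s, (t * x i + if c i < t then K i * (c i - t) else 0)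
      ≤ ∑ i ∈ s, c i * x i :=
    sum_le_sum fun i hi => mul_add_ite_le_mul (hx i hi).1 (hx i hi).2
  rw [sum_add_distrib, ← mul_sum, ← sum_filter] at hterm
  have hslack : t * sl ≤ p * sl := mul_le_mul_of_nonneg_right ht hsl
  unfold dualBound
  linarith

lemma dualBound_of_forall_le (s : Finset ι) (c K : ι → ℝ) {a : ι} (d : ℝ)
    (ha : ∀ i ∈ s, c a ≤ c i) : dualBound s c K (c a) d = c a * d := by
  rw [dualBound, filter_false_of_mem fun i hi => not_lt.2 (ha i hi), sum_empty, add_zero]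

lemma dualBound_insert [DecidableEq ι] {s : Finset ι} {a : ι} (c K : ι → ℝ) {t : ℝ} (d : ℝ)
    (ha : a ∉ s) (hat : c a ≤ t) :
    dualBound (insert a s) c K t d = c a * K a + dualBound s c K t (d - K a) := by
  unfold dualBound
  rw [filter_insert]
  split_ifs with h
  · rw [sum_insert fun h' => ha (mem_filter.1 h').1]
    ring
  · obtain rfl : c a = t := le_antisymm hat (not_lt.1 h)
    ring

theorem exists_feasible_cost_le_dualBound [DecidableEq ι] (c K : ι → ℝ) {p : ℝ}
    (hp : ∀ i, c i ≤ p) (hK : ∀ i, 0 ≤ K i) (s : Finset ι) :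
    ∀ d, 0 ≤ d → ∃ (x : ι → ℝ) (sl t : ℝ),
      (∑ i ∈ s, x i) + sl = d ∧ (∀ i ∈ s, 0 ≤ x i ∧ x i ≤ K i) ∧ 0 ≤ sl ∧
      (t = p ∨ ∃ i ∈ s, t = c i) ∧
      ∑ i ∈ s, c i * x i + p * sl ≤ dualBound s c K t d := by
  induction s using Finset.induction_on_min_value c with
  | empty =>
    intro d hd
    exact ⟨0, d, p, by simp, by simp, hd, Or.inl rfl, by simp [dualBound]⟩
  | insert a s ha hmin ih =>
    intro d hd
    by_cases hdK : d ≤ K a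
    · refine ⟨Pi.single a d, 0, c a, by simp, ?_, le_rfl, Or.inr ⟨a, mem_insert_self a s, rfl⟩,
        ?_⟩
      · intro i _
        rcases eq_or_ne i a with rfl | hia
        · simpa using ⟨hd, hdK⟩
        · simpa [Pi.single_apply, hia] using hK i
      · rw [dualBound_of_forall_le _ _ _ _ (by simpa using hmin)]
        simp [Pi.single_apply]
    · obtain ⟨x, sl, t, hsum, hx, hsl, ht, hle⟩ := ih (d - K a) (by linarith)
      have hat : c a ≤ t := by
        rcases ht with rfl | ⟨i, hi, rfl⟩
        exacts [hp a, hmin i hi]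
      have hupd : ∀ i ∈ s, Function.update x a (K a) i = x i := fun i hi =>
        Function.update_of_ne (ne_of_mem_of_not_mem hi ha) _ _
      refine ⟨Function.update x a (K a), sl, t, ?_, ?_, hsl, ?_, ?_⟩
      · rw [sum_insert ha, sum_congr rfl hupd, Function.update_self]
        linarith
      · intro i hi
        rcases mem_insert.1 hi with rfl | hi
        · simpa using hK i
        · rw [hupd i hi]
          exact hx i hi
      · rcases ht with rfl | ⟨i, hi, rfl⟩
        exacts [Or.inl rfl, Or.inr ⟨i, mem_insert_of_mem hi, rfl⟩]
      · rw [dualBound_insert c K d ha hat, sum_insert ha,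
          sum_congr rfl fun i hi => congrArg (c i * ·) (hupd i hi), Function.update_self]
        linarith

end

lemma isLeast_of_mem_of_le {α : Type*} [PartialOrder α] {S : Set α} {a b : α} (hb : b ∈ S)
    (hba : b ≤ a) (ha : a ∈ lowerBounds S) : IsLeast S a := by
  obtain rfl := le_antisymm hba (ha hb)
  exact ⟨hb, ha⟩

lemma Fin.cases_le {α : Type*} [Preorder α] {n : ℕ} {c : Fin n → α} {p : α} (hp : ∀ i, c i ≤ p) (j : Fin (n + 1)) :
    Fin.cases p c j ≤ p := by
  cases j using Fin.cases with
  | zero => exact le_rfl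
  | succ i => exact hp i

theorem stmt18_general (n : ℕ) (c : Fin n → ℝ) (p : ℝ) (Kc : Fin n → ℝ) (d : ℝ)
    (hp : ∀ i, c i < p) (hK : ∀ i, 0 ≤ Kc i) (hd : 0 ≤ d) :
    IsLeast
      {v : ℝ | ∃ (x : Fin n → ℝ) (s : ℝ),
        (∑ i, x i) + s = d ∧ (∀ i, 0 ≤ x i ∧ x i ≤ Kc i) ∧ 0 ≤ s ∧
        v = ∑ i, c i * x i + p * s}
      ((univ : Finset (Fin (n + 1))).sup' ⟨0, mem_univ 0⟩
        (fun istar =>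
          (Fin.cases p c istar : ℝ) * d +
            ∑ i ∈ univ.filter (fun i => c i < (Fin.cases p c istar : ℝ)),
              Kc i * (c i - (Fin.cases p c istar : ℝ)))) := by
  have hp' : ∀ i, c i ≤ p := fun i => (hp i).le
  change IsLeast _ (univ.sup' _ fun j => dualBound univ c Kc (Fin.cases p c j) d)
  obtain ⟨x, sl, t, hsum, hx, hsl, ht, hle⟩ :=
    exists_feasible_cost_le_dualBound c Kc hp' hK univ d hd
  obtain ⟨j, rfl⟩ : ∃ j, Fin.cases p c j = t := by
    rcases ht with rfl | ⟨i, -, rfl⟩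
    exacts [⟨0, rfl⟩, ⟨i.succ, rfl⟩]
  refine isLeast_of_mem_of_le ⟨x, sl, hsum, fun i => hx i (mem_univ i), hsl, rfl⟩
    (hle.trans (le_sup' (fun j => dualBound univ c Kc (Fin.cases p c j) d) (mem_univ j))) ?_
  rintro v ⟨x, sl, hsum, hx, hsl, rfl⟩
  exact sup'_le _ _ fun k _ => hsum ▸
    dualBound_le_cost univ c Kc x (Fin.cases_le hp' k) (fun i _ => hx i) hsl

theorem stmt18 (n : ℕ) (c : Fin n → ℝ) (p : ℝ) (Kc : Fin n → ℝ) (d : ℝ)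
    (hc : ∀ i, 0 ≤ c i) (hp : ∀ i, c i < p) (hK : ∀ i, 0 ≤ Kc i) (hd : 0 ≤ d) :
    IsLeast
      {v : ℝ | ∃ (x : Fin n → ℝ) (s : ℝ),
        (∑ i, x i) + s = d ∧ (∀ i, 0 ≤ x i ∧ x i ≤ Kc i) ∧ 0 ≤ s ∧
        v = ∑ i, c i * x i + p * s}
      ((univ : Finset (Fin (n + 1))).sup' ⟨0, mem_univ 0⟩
        (fun istar =>
          (Fin.cases p c istar : ℝ) * d +
            ∑ i ∈ univ.filter (fun i => c i < (Fin.cases p c istar : ℝ)),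
              Kc i * (c i - (Fin.cases p c istar : ℝ)))) :=
  stmt18_general n c p Kc d hp hK hd
end
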